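/- For every integer k ≥ 3, there is no injective map f from the vertex set of the Möbius ladder M_k to ℝ² sending adjacent vertices to points at Euclidean distance 1. -/

import Mathlib

/-- One-directional edge description for the Möbius ladder `M_k`:
vertex `(false, j)` is `A_{j+1}` and `(true, j)` is `B_{j+1}`, for `j : Fin k`. -/
def mobStep (k : ℕ) (u v : Bool × Fin k) : Prop :=
  (u.1 ≠ v.1 ∧ u.2 = v.2) ∨
  (u.1 = v.1 ∧ (v.2 : ℕ) = (u.2 : ℕ) + 1) ∨
  (u.1 = false ∧ v.1 = true ∧ (u.2 : ℕ) = 0 ∧ (v.2 : ℕ) = k - 1) ∨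
  (u.1 = false ∧ v.1 = true ∧ (u.2 : ℕ) = k - 1 ∧ (v.2 : ℕ) = 0)

/-- Adjacency in the Möbius ladder `M_k`. -/
def mobAdj (k : ℕ) (u v : Bool × Fin k) : Prop := mobStep k u v ∨ mobStep k v u

/-- Two decompositions of a nonzero vector `m` into sums of two unit vectors coincide
(as unordered pairs), coordinate version. -/
lemma mob_key' (m1 m2 p1 p2 r1 r2 : ℝ)
    (hp : p1^2 + p2^2 = 1) (hq : (m1-p1)^2 + (m2-p2)^2 = 1)
    (hr : r1^2 + r2^2 = 1) (hs : (m1-r1)^2 + (m2-r2)^2 = 1)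
    (hm : m1 ≠ 0 ∨ m2 ≠ 0) :
    (p1 = r1 ∧ p2 = r2) ∨ (p1 = m1 - r1 ∧ p2 = m2 - r2) := by
  have hM : 0 < m1^2 + m2^2 := by
    rcases hm with h | h
    · positivity
    · positivity
  have hd : 2*(p1*m1 + p2*m2) = m1^2 + m2^2 := by linear_combination hp - hq
  have hd' : 2*(r1*m1 + r2*m2) = m1^2 + m2^2 := by linear_combination hr - hs
  have hdd : p1*m1 + p2*m2 - (r1*m1 + r2*m2) = 0 := by linarith
  have hc : (p1*m2 - p2*m1)^2 = (r1*m2 - r2*m1)^2 := by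
    linear_combination (m1^2 + m2^2) * hp - (m1^2 + m2^2) * hr -
      (p1*m1 + p2*m2 + r1*m1 + r2*m2) * hdd
  have hfac : (p1*m2 - p2*m1 - (r1*m2 - r2*m1)) * (p1*m2 - p2*m1 + (r1*m2 - r2*m1)) = 0 := by
    linear_combination hc
  rcases mul_eq_zero.mp hfac with h | h
  · left
    have h1 : (p1 - r1) * (m1^2 + m2^2) = 0 := by linear_combination m1 * hdd + m2 * h
    have h2 : (p2 - r2) * (m1^2 + m2^2) = 0 := by linear_combination m2 * hdd - m1 * h
    constructor
    · have := (mul_eq_zero.mp h1).resolve_right (ne_of_gt hM); linarith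
    · have := (mul_eq_zero.mp h2).resolve_right (ne_of_gt hM); linarith
  · right
    have hds : p1*m1 + p2*m2 - ((m1-r1)*m1 + (m2-r2)*m2) = 0 := by linarith
    have hcs : p1*m2 - p2*m1 - ((m1-r1)*m2 - (m2-r2)*m1) = 0 := by linear_combination h
    have h1 : (p1 - (m1 - r1)) * (m1^2 + m2^2) = 0 := by linear_combination m1 * hds + m2 * hcs
    have h2 : (p2 - (m2 - r2)) * (m1^2 + m2^2) = 0 := by linear_combination m2 * hds - m1 * hcs
    constructor
    · have := (mul_eq_zero.mp h1).resolve_right (ne_of_gt hM); linarith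
    · have := (mul_eq_zero.mp h2).resolve_right (ne_of_gt hM); linarith

lemma mob_dist_sq (x y : EuclideanSpace ℝ (Fin 2)) (h : dist x y = 1) :
    (x 0 - y 0)^2 + (x 1 - y 1)^2 = 1 := by
  have h2 : dist x y ^ 2 = 1 := by rw [h]; norm_num
  rw [EuclideanSpace.dist_eq] at h2
  rw [Real.sq_sqrt (by positivity)] at h2
  simpa [Fin.sum_univ_two, Real.dist_eq, sq_abs] using h2

/-- In a unit-distance 4-cycle with distinct diagonally opposite vertices,
opposite sides are parallel (it is a rhombus). -/
lemma mob_ext (x y : EuclideanSpace ℝ (Fin 2)) (h0 : x 0 = y 0) (h1 : x 1 = y 1) : x = y := by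
  ext i
  fin_cases i <;> assumption

/-- In a unit-distance 4-cycle with distinct diagonally opposite vertices,
opposite sides are parallel (it is a rhombus). -/
lemma mob_quad (a b c d : EuclideanSpace ℝ (Fin 2))
    (hab : dist a b = 1) (hbc : dist b c = 1) (hcd : dist c d = 1) (hda : dist d a = 1)
    (hac : a ≠ c) (hbd : b ≠ d) :
    b - a = c - d := by
  have Hab := mob_dist_sq a b hab
  have Hbc := mob_dist_sq b c hbc
  have Hcd := mob_dist_sq c d hcd
  have Hda := mob_dist_sq d a hda
  have hm : c 0 - a 0 ≠ 0 ∨ c 1 - a 1 ≠ 0 := by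
    by_contra hcon
    push_neg at hcon
    exact hac (mob_ext a c (by linarith [hcon.1]) (by linarith [hcon.2]))
  have key := mob_key' (c 0 - a 0) (c 1 - a 1) (b 0 - a 0) (b 1 - a 1)
      (d 0 - a 0) (d 1 - a 1)
      (by linear_combination Hab) (by linear_combination Hbc)
      (by linear_combination Hda) (by linear_combination Hcd) hm
  rcases key with ⟨h1, h2⟩ | ⟨h1, h2⟩
  · exact absurd (mob_ext b d (by linarith) (by linarith)) hbd
  · have e0 : (b - a) 0 = (c - d) 0 := by
      simp only [PiLp.sub_apply]
      linarith
    have e1 : (b - a) 1 = (c - d) 1 := by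
      simp only [PiLp.sub_apply]
      linarith
    exact mob_ext _ _ e0 e1

theorem stmt_15 (k : ℕ) (hk : 3 ≤ k) :
    ¬ ∃ f : Bool × Fin k → EuclideanSpace ℝ (Fin 2),
      Function.Injective f ∧ ∀ u v, mobAdj k u v → dist (f u) (f v) = 1 := by
  rintro ⟨f, hinj, hd⟩
  have hk0 : 0 < k := by omega
  have hk1 : k - 1 < k := by omega
  -- rungs
  have hrung : ∀ j : Fin k, dist (f (false, j)) (f (true, j)) = 1 := by
    intro j
    exact hd _ _ (Or.inl (Or.inl ⟨by simp, rfl⟩))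
  -- the rung vectors are all equal
  have hstep : ∀ j : ℕ, (h : j + 1 < k) →
      f (true, ⟨j, by omega⟩) - f (false, ⟨j, by omega⟩)
        = f (true, ⟨j+1, h⟩) - f (false, ⟨j+1, h⟩) := by
    intro j h
    have hA : dist (f (false, ⟨j, by omega⟩)) (f (false, ⟨j+1, h⟩)) = 1 :=
      hd _ _ (Or.inl (Or.inr (Or.inl ⟨rfl, rfl⟩)))
    have hB : dist (f (true, ⟨j, by omega⟩)) (f (true, ⟨j+1, h⟩)) = 1 :=
      hd _ _ (Or.inl (Or.inr (Or.inl ⟨rfl, rfl⟩)))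
    have hcd : dist (f (true, ⟨j+1, h⟩)) (f (false, ⟨j+1, h⟩)) = 1 := by
      rw [dist_comm]; exact hrung _
    have hda : dist (f (false, ⟨j+1, h⟩)) (f (false, ⟨j, by omega⟩)) = 1 := by
      rw [dist_comm]; exact hA
    have hac : f (false, (⟨j, by omega⟩ : Fin k)) ≠ f (true, ⟨j+1, h⟩) := by
      intro he; have := hinj he; simp at this
    have hbd : f (true, (⟨j, by omega⟩ : Fin k)) ≠ f (false, ⟨j+1, h⟩) := by
      intro he; have := hinj he; simp at this
    exact mob_quad _ _ _ _ (hrung ⟨j, by omega⟩) hB hcd hda hac hbd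
  have hchain : ∀ j : ℕ, (h : j < k) →
      f (true, ⟨j, h⟩) - f (false, ⟨j, h⟩)
        = f (true, ⟨0, hk0⟩) - f (false, ⟨0, hk0⟩) := by
    intro j
    induction j with
    | zero => intro h; rfl
    | succ n ih =>
      intro h
      have hn : n < k := by omega
      rw [← hstep n h]
      exact ih hn
  -- the Möbius twist
  have htw1 : dist (f (true, (⟨0, hk0⟩ : Fin k))) (f (false, ⟨k-1, hk1⟩)) = 1 := by
    rw [dist_comm]
    exact hd _ _ (Or.inl (Or.inr (Or.inr (Or.inr ⟨rfl, rfl, rfl, rfl⟩))))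
  have htw2 : dist (f (true, (⟨k-1, hk1⟩ : Fin k))) (f (false, ⟨0, hk0⟩)) = 1 := by
    rw [dist_comm]
    exact hd _ _ (Or.inl (Or.inr (Or.inr (Or.inl ⟨rfl, rfl, rfl, rfl⟩))))
  have hcd : dist (f (false, (⟨k-1, hk1⟩ : Fin k))) (f (true, ⟨k-1, hk1⟩)) = 1 := hrung _
  have hne01 : ((⟨0, hk0⟩ : Fin k)) ≠ ⟨k-1, hk1⟩ := by
    intro he
    have := Fin.mk.injEq 0 hk0 (k-1) hk1 ▸ he
    simp only [Fin.mk.injEq] at he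
    omega
  have hac : f (false, (⟨0, hk0⟩ : Fin k)) ≠ f (false, ⟨k-1, hk1⟩) := by
    intro he; have := hinj he; simp only [Prod.mk.injEq, Fin.mk.injEq] at this; omega
  have hbd : f (true, (⟨0, hk0⟩ : Fin k)) ≠ f (true, ⟨k-1, hk1⟩) := by
    intro he; have := hinj he; simp only [Prod.mk.injEq, Fin.mk.injEq] at this; omega
  have htwist := mob_quad (f (false, ⟨0, hk0⟩)) (f (true, ⟨0, hk0⟩))
      (f (false, ⟨k-1, hk1⟩)) (f (true, ⟨k-1, hk1⟩))
      (hrung _) htw1 hcd htw2 hac hbd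
  -- combine
  have hch := hchain (k-1) hk1
  have he : f (true, (⟨0, hk0⟩ : Fin k)) - f (false, ⟨0, hk0⟩)
      = -(f (true, (⟨0, hk0⟩ : Fin k)) - f (false, ⟨0, hk0⟩)) := by
    calc f (true, (⟨0, hk0⟩ : Fin k)) - f (false, ⟨0, hk0⟩)
        = f (false, (⟨k-1, hk1⟩ : Fin k)) - f (true, ⟨k-1, hk1⟩) := htwist
      _ = -(f (true, (⟨k-1, hk1⟩ : Fin k)) - f (false, ⟨k-1, hk1⟩)) := by abel
      _ = -(f (true, (⟨0, hk0⟩ : Fin k)) - f (false, ⟨0, hk0⟩)) := by rw [hch]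
  have h2 : (2:ℝ) • (f (true, (⟨0, hk0⟩ : Fin k)) - f (false, ⟨0, hk0⟩)) = 0 := by
    rw [two_smul]
    nth_rewrite 1 [he]
    abel
  have hzero : f (true, (⟨0, hk0⟩ : Fin k)) - f (false, ⟨0, hk0⟩) = 0 :=
    (smul_eq_zero.mp h2).resolve_left (by norm_num)
  have hnorm : ‖f (true, (⟨0, hk0⟩ : Fin k)) - f (false, ⟨0, hk0⟩)‖ = 1 := by
    rw [← dist_eq_norm, dist_comm]
    exact hrung _
  rw [hzero, norm_zero] at hnorm
  exact zero_ne_one hnorm
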